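/- Let f, g: ℝⁿ → ℝ ∪ {+∞} be convex lower semicontinuous proper functions with dom f ∩ dom g ≠ ∅ (and suitable qualification, e.g., one of them continuous at a common point of the domains). Then the convex conjugate of f + g equals the infimal convolution of the conjugates: (f + g)* = f* □ g*, where (f* □ g*)(x) := inf_y f*(x − y) + g*(y). -/

import Mathlib

/-!
The inequality `(f + g)* x ≤ f* (x - y) + g* y` holds term by term. Conversely, if
`r = (f + g)* x` is finite, then the convex function `f` lies above the concave function
`z ↦ ⟪x, z⟫ - r - g z`. As `f` is bounded above near the point `x₀` of `dom g`, the strict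
epigraph of `f` has nonempty interior, and Hahn–Banach separates it from the hypograph of the
concave function by a non-vertical hyperplane: an affine function `⟪w, ·⟫ + σ` lies between the
two. Then `f* w ≤ -σ` and `g* (x - w) ≤ r + σ`, so the infimum is attained at `y = x - w`.
-/

open Set Filter Topology
open scoped RealInnerProductSpace

lemma StrongDual.apply_prod_eq {E : Type*} [TopologicalSpace E] [AddCommGroup E] [Module ℝ E]
    (L : StrongDual ℝ (E × ℝ)) (z : E) (τ : ℝ) : L (z, τ) = L (z, 0) + τ * L (0, 1) := by
  rw [← smul_eq_mul, ← map_smul, ← map_add]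
  simp

section Sandwich

variable {E : Type*} [TopologicalSpace E] [AddCommGroup E] [Module ℝ E]
  [IsTopologicalAddGroup E] [ContinuousSMul ℝ E]
  {s t : Set E} {F G : E → ℝ} {x₀ : E} {M : ℝ}

theorem ConvexOn.exists_separation_strictEpigraph_hypograph (hF : ConvexOn ℝ s F)
    (hG : ConcaveOn ℝ t G) (hGF : ∀ z ∈ s ∩ t, G z ≤ F z) (hx₀ : x₀ ∈ t)
    (hM : ∀ᶠ z in 𝓝 x₀, z ∈ s ∧ F z ≤ M) :
    ∃ (L : StrongDual ℝ (E × ℝ)) (u : ℝ), L (0, 1) < 0 ∧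
      (∀ z ∈ s, ∀ τ, F z < τ → L (z, τ) ≤ u) ∧ ∀ z ∈ t, u ≤ L (z, G z) := by
  set C := {p : E × ℝ | p.1 ∈ s ∧ F p.1 < p.2}
  have hCconv : Convex ℝ C := hF.convex_strict_epigraph
  have hCD : Disjoint (interior C) {p : E × ℝ | p.1 ∈ t ∧ p.2 ≤ G p.1} := by
    refine disjoint_left.2 fun p hpC hpD => ?_
    obtain ⟨hps, hpF⟩ := interior_subset hpC
    exact (hpD.2.trans (hGF p.1 ⟨hps, hpD.1⟩)).not_gt hpF
  have hray : ∀ τ, M < τ → (x₀, τ) ∈ interior C := by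
    obtain ⟨U, hU, hUo, hx₀U⟩ := eventually_nhds_iff.1 hM
    refine fun τ hτ => interior_maximal ?_ (hUo.prod isOpen_Ioi) ⟨hx₀U, hτ⟩
    rintro ⟨z, τ'⟩ ⟨hz, hτ'⟩
    exact ⟨(hU z hz).1, (hU z hz).2.trans_lt hτ'⟩
  obtain ⟨L, u, hLint, hLD⟩ := geometric_hahn_banach_open hCconv.interior isOpen_interior
    hG.convex_hypograph hCD
  have hLC : ∀ p ∈ C, L p ≤ u := by
    refine fun p hp => closure_minimal (fun q hq => (hLint q hq).le)
      (isClosed_le L.continuous continuous_const) ?_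
    rw [hCconv.closure_interior_eq_closure_of_nonempty_interior ⟨_, hray (M + 1) (by linarith)⟩]
    exact subset_closure hp
  refine ⟨L, u, ?_, fun z hz τ hτ => hLC (z, τ) ⟨hz, hτ⟩, fun z hz => hLD (z, G z) ⟨hz, le_rfl⟩⟩
  -- The hyperplane is not vertical: it passes strictly below `(x₀, τ)` for large `τ`
  -- but not above `(x₀, G x₀)`.
  have hup := hLint _ (hray (max M (G x₀) + 1) (by linarith [le_max_left M (G x₀)]))
  have hdown := hLD (x₀, G x₀) ⟨hx₀, le_rfl⟩
  rw [L.apply_prod_eq] at hup hdown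
  nlinarith [le_max_right M (G x₀)]

theorem ConvexOn.exists_affine_between (hF : ConvexOn ℝ s F) (hG : ConcaveOn ℝ t G)
    (hGF : ∀ z ∈ s ∩ t, G z ≤ F z) (hx₀ : x₀ ∈ t) (hM : ∀ᶠ z in 𝓝 x₀, z ∈ s ∧ F z ≤ M) :
    ∃ (φ : StrongDual ℝ E) (σ : ℝ), (∀ z ∈ s, φ z + σ ≤ F z) ∧ ∀ z ∈ t, G z ≤ φ z + σ := by
  obtain ⟨L, u, hc, hLC, hLD⟩ := hF.exists_separation_strictEpigraph_hypograph hG hGF hx₀ hM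
  set c := L (0, 1)
  have hc' : 0 < -c := neg_pos.2 hc
  set φ := (-c)⁻¹ • L.comp (ContinuousLinearMap.inl ℝ E ℝ)
  have hφ : ∀ z, φ z + -((-c)⁻¹ * u) = (-c)⁻¹ * (L (z, 0) - u) := fun z => by
    simp only [φ, FunLike.coe_smul, Pi.smul_apply, ContinuousLinearMap.comp_apply,
      ContinuousLinearMap.inl_apply, smul_eq_mul]
    ring
  refine ⟨φ, -((-c)⁻¹ * u), fun z hz => ?_, fun z hz => ?_⟩ <;> rw [hφ]
  · refine le_of_forall_gt_imp_ge_of_dense fun τ hτ => ?_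
    have := hLC z hz τ hτ
    rw [L.apply_prod_eq] at this
    rw [inv_mul_le_iff₀ hc']
    linarith
  · have := hLD z hz
    rw [L.apply_prod_eq] at this
    rw [le_inv_mul_iff₀ hc']
    linarith

end Sandwich

lemma EReal.coe_add_sub_add {a b : ℝ} {p q : EReal} (hp : p ≠ ⊥) (hq : q ≠ ⊥) :
    ((a + b : ℝ) : EReal) - (p + q) = (a - p) + (b - q) := by
  induction p with
  | bot => exact absurd rfl hp
  | top => simp [EReal.top_add_of_ne_bot hq]
  | coe p =>
    induction q with
    | bot => exact absurd rfl hq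
    | top => simp
    | coe q =>
      norm_cast
      ring

lemma convexOn_toReal_of_ereal {E : Type*} [AddCommGroup E] [Module ℝ E] {f : E → EReal}
    (hbot : ∀ x, f x ≠ ⊥)
    (hconv : ∀ x y : E, ∀ a b : ℝ, 0 ≤ a → 0 ≤ b → a + b = 1 →
      f (a • x + b • y) ≤ (a : EReal) * f x + (b : EReal) * f y) :
    ConvexOn ℝ {x | f x ≠ ⊤} fun x => (f x).toReal := by
  have key : ∀ x ∈ {x | f x ≠ ⊤}, ∀ y ∈ {x | f x ≠ ⊤}, ∀ a b : ℝ, 0 ≤ a → 0 ≤ b → a + b = 1 →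
      f (a • x + b • y) ≤ ((a * (f x).toReal + b * (f y).toReal : ℝ) : EReal) := by
    intro x hx y hy a b ha hb hab
    rw [EReal.coe_add, EReal.coe_mul, EReal.coe_mul, EReal.coe_toReal hx (hbot x),
      EReal.coe_toReal hy (hbot y)]
    exact hconv x y a b ha hb hab
  have hdom : Convex ℝ {x | f x ≠ ⊤} := fun x hx y hy a b ha hb hab =>
    ((key x hx y hy a b ha hb hab).trans_lt (EReal.coe_lt_top _)).ne
  refine ⟨hdom, fun x hx y hy a b ha hb hab => ?_⟩
  have := key x hx y hy a b ha hb hab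
  rwa [← EReal.coe_toReal (hdom hx hy ha hb hab) (hbot _), EReal.coe_le_coe_iff] at this

lemma ContinuousAt.eventually_ne_top_and_toReal_le {X : Type*} [TopologicalSpace X]
    {f : X → EReal} {x₀ : X} (hf : ContinuousAt f x₀) (hbot : ∀ x, f x ≠ ⊥) (hx₀ : f x₀ ≠ ⊤) :
    ∀ᶠ x in 𝓝 x₀, f x ≠ ⊤ ∧ (f x).toReal ≤ (f x₀).toReal + 1 := by
  have hlt : f x₀ < ((f x₀).toReal + 1 : ℝ) := by
    rw [← EReal.coe_toReal hx₀ (hbot x₀)]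
    exact_mod_cast lt_add_one _
  filter_upwards [hf.eventually_lt_const hlt] with x hx
  have hx' : f x ≠ ⊤ := (hx.trans (EReal.coe_lt_top _)).ne
  rw [← EReal.coe_toReal hx' (hbot x)] at hx
  exact ⟨hx', by exact_mod_cast hx.le⟩

section FenchelConjugate

variable {E : Type*} [NormedAddCommGroup E] [InnerProductSpace ℝ E]

noncomputable def fenchelConjugate (F : E → EReal) (x : E) : EReal :=
  ⨆ y, (⟪x, y⟫ : EReal) - F y

lemma le_fenchelConjugate (F : E → EReal) (x y : E) :
    (⟪x, y⟫ : EReal) - F y ≤ fenchelConjugate F x :=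
  le_iSup (fun y => (⟪x, y⟫ : EReal) - F y) y

lemma fenchelConjugate_le {F : E → EReal} {x : E} {a : ℝ} (hbot : ∀ y, F y ≠ ⊥)
    (h : ∀ y, F y ≠ ⊤ → ⟪x, y⟫ - a ≤ (F y).toReal) : fenchelConjugate F x ≤ a := by
  refine iSup_le fun y => ?_
  by_cases hy : F y = ⊤
  · simp [hy]
  rw [← EReal.coe_toReal hy (hbot y), ← EReal.coe_sub, EReal.coe_le_coe_iff]
  linarith [h y hy]

lemma fenchelConjugate_add_le {f g : E → EReal} (hfbot : ∀ x, f x ≠ ⊥) (hgbot : ∀ x, g x ≠ ⊥)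
    (x y : E) : fenchelConjugate (f + g) x ≤ fenchelConjugate f (x - y) + fenchelConjugate g y := by
  refine iSup_le fun z => ?_
  calc (⟪x, z⟫ : EReal) - (f z + g z)
      = ((⟪x - y, z⟫ : EReal) - f z) + ((⟪y, z⟫ : EReal) - g z) := by
        rw [← EReal.coe_add_sub_add (hfbot z) (hgbot z), ← inner_add_left, sub_add_cancel]
    _ ≤ fenchelConjugate f (x - y) + fenchelConjugate g y :=
        add_le_add (le_fenchelConjugate f _ z) (le_fenchelConjugate g y z)

variable [CompleteSpace E] {f g : E → EReal} {x₀ : E}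

theorem exists_fenchelConjugate_add_le_of_le (hfbot : ∀ x, f x ≠ ⊥) (hgbot : ∀ x, g x ≠ ⊥)
    (hfconv : ∀ x y : E, ∀ a b : ℝ, 0 ≤ a → 0 ≤ b → a + b = 1 →
      f (a • x + b • y) ≤ (a : EReal) * f x + (b : EReal) * f y)
    (hgconv : ∀ x y : E, ∀ a b : ℝ, 0 ≤ a → 0 ≤ b → a + b = 1 →
      g (a • x + b • y) ≤ (a : EReal) * g x + (b : EReal) * g y)
    (hx₀f : f x₀ ≠ ⊤) (hx₀g : g x₀ ≠ ⊤) (hf : ContinuousAt f x₀) {x : E} {r : ℝ}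
    (hr : fenchelConjugate (f + g) x ≤ r) :
    ∃ y, fenchelConjugate f (x - y) + fenchelConjugate g y ≤ r := by
  have hGF : ∀ z ∈ {z | f z ≠ ⊤} ∩ {z | g z ≠ ⊤}, ⟪x, z⟫ - r - (g z).toReal ≤ (f z).toReal := by
    rintro z ⟨hfz, hgz⟩
    have := (le_fenchelConjugate (f + g) x z).trans hr
    rw [Pi.add_apply, ← EReal.coe_toReal hfz (hfbot z), ← EReal.coe_toReal hgz (hgbot z)] at this
    norm_cast at this
    linarith
  have hg := convexOn_toReal_of_ereal hgbot hgconv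
  have hG : ConcaveOn ℝ {z | g z ≠ ⊤} fun z => ⟪x, z⟫ - r - (g z).toReal :=
    (((innerₛₗ ℝ x).concaveOn hg.1).add_const (-r)).sub hg
  obtain ⟨φ, σ, hφF, hφG⟩ := (convexOn_toReal_of_ereal hfbot hfconv).exists_affine_between hG hGF
    hx₀g (hf.eventually_ne_top_and_toReal_le hfbot hx₀f)
  set w := (InnerProductSpace.toDual ℝ E).symm φ
  have hw : ∀ z, ⟪w, z⟫ = φ z := fun z => InnerProductSpace.toDual_symm_apply
  have hfw : fenchelConjugate f w ≤ (-σ : ℝ) :=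
    fenchelConjugate_le hfbot fun z hz => by linarith [hw z, hφF z hz]
  have hgw : fenchelConjugate g (x - w) ≤ (r + σ : ℝ) :=
    fenchelConjugate_le hgbot fun z hz => by
      linarith [inner_sub_left (𝕜 := ℝ) x w z, hw z, hφG z hz]
  refine ⟨x - w, ?_⟩
  calc fenchelConjugate f (x - (x - w)) + fenchelConjugate g (x - w)
      ≤ ((-σ : ℝ) : EReal) + ((r + σ : ℝ) : EReal) := by
        rw [sub_sub_cancel]
        exact add_le_add hfw hgw
    _ = r := by
        norm_cast
        ring

theorem fenchelConjugate_add_eq_iInf (hfbot : ∀ x, f x ≠ ⊥) (hgbot : ∀ x, g x ≠ ⊥)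
    (hfconv : ∀ x y : E, ∀ a b : ℝ, 0 ≤ a → 0 ≤ b → a + b = 1 →
      f (a • x + b • y) ≤ (a : EReal) * f x + (b : EReal) * f y)
    (hgconv : ∀ x y : E, ∀ a b : ℝ, 0 ≤ a → 0 ≤ b → a + b = 1 →
      g (a • x + b • y) ≤ (a : EReal) * g x + (b : EReal) * g y)
    (hx₀f : f x₀ ≠ ⊤) (hx₀g : g x₀ ≠ ⊤) (hf : ContinuousAt f x₀) (x : E) :
    fenchelConjugate (f + g) x = ⨅ y, fenchelConjugate f (x - y) + fenchelConjugate g y := by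
  refine le_antisymm (le_iInf (fenchelConjugate_add_le hfbot hgbot x)) ?_
  rcases eq_top_or_lt_top (fenchelConjugate (f + g) x) with htop | hlt
  · exact htop ▸ le_top
  have hbot : fenchelConjugate (f + g) x ≠ ⊥ := by
    refine ne_bot_of_le_ne_bot ?_ (le_fenchelConjugate _ x x₀)
    rw [Pi.add_apply, ← EReal.coe_toReal hx₀f (hfbot x₀), ← EReal.coe_toReal hx₀g (hgbot x₀)]
    exact EReal.coe_ne_bot _
  have hreal := EReal.coe_toReal hlt.ne hbot
  obtain ⟨y, hy⟩ :=
    exists_fenchelConjugate_add_le_of_le hfbot hgbot hfconv hgconv hx₀f hx₀g hf hreal.ge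
  exact iInf_le_of_le y (hy.trans hreal.le)

end FenchelConjugate

theorem stmt_6_general (n : ℕ)
    (f g : EuclideanSpace ℝ (Fin n) → EReal)
    -- properness: never -∞, not identically +∞
    (hfbot : ∀ x, f x ≠ ⊥) (hgbot : ∀ x, g x ≠ ⊥)
    -- convexity
    (hfconv : ∀ x y : EuclideanSpace ℝ (Fin n), ∀ a b : ℝ, 0 ≤ a → 0 ≤ b → a + b = 1 →
      f (a • x + b • y) ≤ (a : EReal) * f x + (b : EReal) * f y)
    (hgconv : ∀ x y : EuclideanSpace ℝ (Fin n), ∀ a b : ℝ, 0 ≤ a → 0 ≤ b → a + b = 1 →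
      g (a • x + b • y) ≤ (a : EReal) * g x + (b : EReal) * g y)
    -- domains overlap, with constraint qualification: f continuous at a common domain point
    (x₀ : EuclideanSpace ℝ (Fin n)) (hx₀f : f x₀ ≠ ⊤) (hx₀g : g x₀ ≠ ⊤)
    (hqual : ContinuousAt f x₀)
    -- the convex conjugate
    (conj : (EuclideanSpace ℝ (Fin n) → EReal) → EuclideanSpace ℝ (Fin n) → EReal)
    (hconj : ∀ F x, conj F x = ⨆ y, (((inner ℝ x y : ℝ) : EReal) - F y)) :
    ∀ x, conj (fun y => f y + g y) x = ⨅ y, (conj f (x - y) + conj g y) := by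
  obtain rfl : conj = fenchelConjugate := funext fun F => funext (hconj F)
  exact fenchelConjugate_add_eq_iInf hfbot hgbot hfconv hgconv hx₀f hx₀g hqual

/-- Fenchel: for convex, lower semicontinuous, proper `f, g : ℝⁿ → ℝ ∪ {+∞}` with
overlapping domains and a qualification (continuity of `f` at a common domain point),
the conjugate of the sum is the infimal convolution of the conjugates. -/
theorem stmt_6 (n : ℕ)
    (f g : EuclideanSpace ℝ (Fin n) → EReal)
    -- properness: never -∞, not identically +∞
    (hfbot : ∀ x, f x ≠ ⊥) (hgbot : ∀ x, g x ≠ ⊥)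
    (hfproper : ∃ x, f x ≠ ⊤) (hgproper : ∃ x, g x ≠ ⊤)
    -- convexity
    (hfconv : ∀ x y : EuclideanSpace ℝ (Fin n), ∀ a b : ℝ, 0 ≤ a → 0 ≤ b → a + b = 1 →
      f (a • x + b • y) ≤ (a : EReal) * f x + (b : EReal) * f y)
    (hgconv : ∀ x y : EuclideanSpace ℝ (Fin n), ∀ a b : ℝ, 0 ≤ a → 0 ≤ b → a + b = 1 →
      g (a • x + b • y) ≤ (a : EReal) * g x + (b : EReal) * g y)
    -- lower semicontinuity
    (hflsc : LowerSemicontinuous f) (hglsc : LowerSemicontinuous g)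
    -- domains overlap, with constraint qualification: f continuous at a common domain point
    (x₀ : EuclideanSpace ℝ (Fin n)) (hx₀f : f x₀ ≠ ⊤) (hx₀g : g x₀ ≠ ⊤)
    (hqual : ContinuousAt f x₀)
    -- the convex conjugate
    (conj : (EuclideanSpace ℝ (Fin n) → EReal) → EuclideanSpace ℝ (Fin n) → EReal)
    (hconj : ∀ F x, conj F x = ⨆ y, (((inner ℝ x y : ℝ) : EReal) - F y)) :
    ∀ x, conj (fun y => f y + g y) x = ⨅ y, (conj f (x - y) + conj g y) :=
  stmt_6_general n f g hfbot hgbot hfconv hgconv x₀ hx₀f hx₀g hqual conj hconj
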